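/- arXiv:1601.07068 — 8 statements merged into one kernel-verified Lean document; each statement's English description precedes it below -/
import Mathlib

section
/- For all i ≥ 0, the residual gap of the finite-precision classical CG recurrences is the accumulated sum of local rounding errors: f_{i+1} = f_0 − Σ_{j=0}^{i} (A δ^x_j + δ^r_j). -/
theorem residual_gap_update {R E F : Type*} [Ring R] [AddCommGroup E] [Module R E]
    [FunLike F E E] [LinearMapClass F R E E] (A : F) (b x r p δx δr : E) (α : R) :
    (b - A (x + α • p + δx)) - (r - α • A p + δr) = (b - A x - r) - (A δx + δr) := by
  simp only [map_add, map_smul]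
  abel

theorem eq_sub_sum_range_of_succ_eq_sub {G : Type*} [AddCommGroup G] {u d : ℕ → G}
    (h : ∀ i, u (i + 1) = u i - d i) (n : ℕ) : u n = u 0 - ∑ j ∈ Finset.range n, d j := by
  have hd : ∀ j, d j = u j - u (j + 1) := fun j => by rw [h]; abel
  simp only [hd, Finset.sum_range_sub', sub_sub_cancel]

/-- For all `i ≥ 0`, the residual gap of the finite-precision classical CG
recurrences is the accumulated sum of local rounding errors:
`f (i+1) = f 0 - Σ_{j=0}^{i} (A (δx j) + δr j)`. -/
theorem cg_residual_gap_sum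
    {E : Type*} [NormedAddCommGroup E] [NormedSpace ℝ E]
    (A : E →L[ℝ] E) (b : E)
    (x r p δx δr f : ℕ → E) (α : ℕ → ℝ)
    (hx : ∀ i, x (i + 1) = x i + α i • p i + δx i)
    (hr : ∀ i, r (i + 1) = r i - α i • (A (p i)) + δr i)
    (hf : ∀ i, f i = (b - A (x i)) - r i) :
    ∀ i, f (i + 1) = f 0 - ∑ j ∈ Finset.range (i + 1), (A (δx j) + δr j) := by
  have hstep : ∀ i, f (i + 1) = f i - (A (δx i) + δr i) := fun i => by
    rw [hf, hf, hx, hr, residual_gap_update]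
  exact fun i => eq_sub_sum_range_of_succ_eq_sub hstep (i + 1)
end

section
/- For all i ≥ 0, the norm of the residual gap of the finite-precision classical CG recurrences satisfies ‖f_{i+1}‖ ≤ ‖f_0‖ + Σ_{j=0}^{i} ‖A δ^x_j + δ^r_j‖; in particular ‖f_{i+1}‖ ≤ ‖f_i‖ + ‖A δ^x_i + δ^r_i‖. -/
/-! The local errors of the `x`- and `r`-updates enter the gap `f = (b - A x) - r` only through
`A δx + δr`, since the exact parts `α p` and `α A p` cancel; hence `f (i + 1) = f i - (A δx i + δr i)`
and the bounds follow from the triangle inequality, telescoped from `0` to `i + 1`. -/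

open Finset

theorem norm_le_norm_zero_add_sum_norm_sub_succ {E : Type*} [SeminormedAddCommGroup E]
    (u : ℕ → E) (n : ℕ) : ‖u n‖ ≤ ‖u 0‖ + ∑ i ∈ range n, ‖u i - u (i + 1)‖ := by
  calc ‖u n‖ ≤ ‖u 0‖ + dist (u 0) (u n) := by
        rw [dist_eq_norm, norm_sub_rev]; exact norm_le_insert' _ _
    _ ≤ ‖u 0‖ + ∑ i ∈ range n, dist (u i) (u (i + 1)) := by
        gcongr; exact dist_le_range_sum_dist u n
    _ = ‖u 0‖ + ∑ i ∈ range n, ‖u i - u (i + 1)‖ := by simp only [dist_eq_norm]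

theorem residualGap_succ {R M : Type*} [Ring R] [AddCommGroup M] [Module R M]
    (A : M →ₗ[R] M) (b : M) (x r p δx δr f : ℕ → M) (α : ℕ → R)
    (hx : ∀ i, x (i + 1) = x i + α i • p i + δx i)
    (hr : ∀ i, r (i + 1) = r i - α i • A (p i) + δr i)
    (hf : ∀ i, f i = (b - A (x i)) - r i) (i : ℕ) :
    f (i + 1) = f i - (A (δx i) + δr i) := by
  rw [hf, hf, hx, hr, map_add, map_add, map_smul]
  abel

/-- For all `i ≥ 0`, the norm of the residual gap of the finite-precision
classical CG recurrences satisfies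
`‖f (i+1)‖ ≤ ‖f 0‖ + Σ_{j=0}^{i} ‖A (δx j) + δr j‖`;
in particular `‖f (i+1)‖ ≤ ‖f i‖ + ‖A (δx i) + δr i‖`. -/
theorem cg_residual_gap_norm_bound
    {E : Type*} [NormedAddCommGroup E] [NormedSpace ℝ E]
    (A : E →L[ℝ] E) (b : E)
    (x r p δx δr f : ℕ → E) (α : ℕ → ℝ)
    (hx : ∀ i, x (i + 1) = x i + α i • p i + δx i)
    (hr : ∀ i, r (i + 1) = r i - α i • (A (p i)) + δr i)
    (hf : ∀ i, f i = (b - A (x i)) - r i) :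
    ∀ i, ‖f (i + 1)‖ ≤ ‖f 0‖ + ∑ j ∈ Finset.range (i + 1), ‖A (δx j) + δr j‖ ∧
      ‖f (i + 1)‖ ≤ ‖f i‖ + ‖A (δx i) + δr i‖ := by
  have gap_succ : ∀ i, f i - f (i + 1) = A (δx i) + δr i := fun i => by
    rw [residualGap_succ A.toLinearMap b x r p δx δr f α hx hr hf i, sub_sub_cancel]; rfl
  intro i
  constructor
  · simpa only [gap_succ] using norm_le_norm_zero_add_sum_norm_sub_succ f (i + 1)
  · rw [← gap_succ, norm_sub_rev]
    exact norm_le_insert' _ _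
end

section
/- For all i ≥ 1, the norms of the residual gap and auxiliary gap of the finite-precision Chronopoulos/Gear CG recurrences satisfy the coupled bounds ‖f_{i+1}‖ ≤ ‖f_i‖ + |α_i β_i|·‖g_{i−1}‖ + ‖A δ^x_i + δ^r_i‖ + |α_i|·‖A δ^p_i − δ^s_i‖ and ‖g_i‖ ≤ |β_i|·‖g_{i−1}‖ + ‖A δ^p_i − δ^s_i‖. -/
/-!
Both gaps obey exact one-step recurrences in which only the rounding errors enter:
`g (i+1) = β (i+1) • g i + (A (δp (i+1)) - δs (i+1))`, because the exact parts of the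
updates of `p` and `s` are mapped onto each other by `A`, and
`f (i+2) = f (i+1) - (A (δx (i+1)) + δr (i+1)) - α (i+1) • g (i+1)`, because `x` is updated
along `p` while `r` is updated along `s`. The bounds follow by the triangle inequality,
substituting the first recurrence into the last term of the second.
-/

section GapRecurrences

variable {R M F : Type*} [CommRing R] [AddCommGroup M] [Module R M] [FunLike F M M]
  [LinearMapClass F R M M] (A : F)

theorem auxGap_succ_eq {p p' s s' u δp δs : M} {β : R}
    (hp : p' = u + β • p + δp) (hs : s' = A u + β • s + δs) :
    A p' - s' = β • (A p - s) + (A δp - δs) := by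
  subst hp hs
  simp only [map_add, map_smul]
  module

theorem residualGap_succ_eq (b : M) {x x' r r' p s δx δr : M} {α : R}
    (hx : x' = x + α • p + δx) (hr : r' = r - α • s + δr) :
    (b - A x') - r' = (b - A x) - r - (A δx + δr) - α • (A p - s) := by
  subst hx hr
  simp only [map_add, map_smul]
  module

end GapRecurrences

section NormBounds

variable {𝕜 E : Type*} [NormedField 𝕜] [SeminormedAddCommGroup E] [NormedSpace 𝕜 E]

theorem norm_smul_add_le (c : 𝕜) (v w : E) : ‖c • v + w‖ ≤ ‖c‖ * ‖v‖ + ‖w‖ :=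
  (norm_add_le _ _).trans_eq (by rw [norm_smul])

theorem norm_sub_sub_smul_le (v w z : E) (c : 𝕜) :
    ‖v - w - c • z‖ ≤ ‖v‖ + ‖w‖ + ‖c‖ * ‖z‖ :=
  calc ‖v - w - c • z‖ ≤ ‖v - w‖ + ‖c • z‖ := norm_sub_le _ _
    _ ≤ ‖v‖ + ‖w‖ + ‖c‖ * ‖z‖ := by rw [norm_smul]; gcongr; exact norm_sub_le _ _

end NormBounds

/-- For all `i ≥ 1`, the norms of the residual gap and the auxiliary gap of the
finite-precision Chronopoulos/Gear CG recurrences satisfy the coupled bounds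
`‖f (i+1)‖ ≤ ‖f i‖ + |α i β i| ‖g (i-1)‖ + ‖A (δx i) + δr i‖ + |α i| ‖A (δp i) - δs i‖`
and `‖g i‖ ≤ |β i| ‖g (i-1)‖ + ‖A (δp i) - δs i‖`. -/
theorem cgcg_coupled_norm_bounds
    {E : Type*} [NormedAddCommGroup E] [NormedSpace ℝ E]
    (A : E →L[ℝ] E) (b : E)
    (x r p s u δx δr δp δs f g : ℕ → E) (α β : ℕ → ℝ)
    (hx : ∀ i, x (i + 1) = x i + α i • p i + δx i)
    (hr : ∀ i, r (i + 1) = r i - α i • s i + δr i)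
    (hp : ∀ i, p (i + 1) = u (i + 1) + β (i + 1) • p i + δp (i + 1))
    (hs : ∀ i, s (i + 1) = A (u (i + 1)) + β (i + 1) • s i + δs (i + 1))
    (hg : ∀ i, g i = A (p i) - s i)
    (hf : ∀ i, f i = (b - A (x i)) - r i) :
    ∀ i, ‖f (i + 2)‖ ≤ ‖f (i + 1)‖ + |α (i + 1) * β (i + 1)| * ‖g i‖ +
        ‖A (δx (i + 1)) + δr (i + 1)‖ + |α (i + 1)| * ‖A (δp (i + 1)) - δs (i + 1)‖ ∧
      ‖g (i + 1)‖ ≤ |β (i + 1)| * ‖g i‖ + ‖A (δp (i + 1)) - δs (i + 1)‖ := by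
  intro i
  have hg_succ : g (i + 1) = β (i + 1) • g i + (A (δp (i + 1)) - δs (i + 1)) := by
    rw [hg, hg]
    exact auxGap_succ_eq A (hp i) (hs i)
  have hf_succ :
      f (i + 2) = f (i + 1) - (A (δx (i + 1)) + δr (i + 1)) - α (i + 1) • g (i + 1) := by
    rw [hf, hf, hg]
    exact residualGap_succ_eq A b (hx (i + 1)) (hr (i + 1))
  have g_bound : ‖g (i + 1)‖ ≤ |β (i + 1)| * ‖g i‖ + ‖A (δp (i + 1)) - δs (i + 1)‖ := by
    simpa only [hg_succ, Real.norm_eq_abs] using norm_smul_add_le (β (i + 1)) (g i) _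
  refine ⟨?_, g_bound⟩
  calc ‖f (i + 2)‖
      ≤ ‖f (i + 1)‖ + ‖A (δx (i + 1)) + δr (i + 1)‖ + |α (i + 1)| * ‖g (i + 1)‖ := by
        simpa only [hf_succ, Real.norm_eq_abs] using norm_sub_sub_smul_le _ _ _ (α (i + 1))
    _ ≤ ‖f (i + 1)‖ + ‖A (δx (i + 1)) + δr (i + 1)‖ +
          |α (i + 1)| * (|β (i + 1)| * ‖g i‖ + ‖A (δp (i + 1)) - δs (i + 1)‖) := by
        gcongr
    _ = _ := by rw [abs_mul]; ring
end

section
/- For all i ≥ 1, the four gaps of the finite-precision pipelined CG recurrences satisfy the coupled system f_{i+1} = f_i − α_i β_i g_{i−1} − α_i h_i − A δ^x_i − δ^r_i − α_i (A δ^p_i − δ^s_i), g_i = β_i g_{i−1} + h_i + (A δ^p_i − δ^s_i), h_{i+1} = h_i − α_i β_i j_{i−1} + A δ^u_i − δ^w_i − α_i (A δ^q_i − δ^z_i), and j_i = β_i j_{i−1} + (A δ^q_i − δ^z_i). -/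
/-!
Each gap has the form `A v - v'`, where `v` and `v'` obey recurrences with the same coefficients.
By linearity of `A`, subtracting the two recurrences gives a recurrence for the gap whose local
error is `A δ - δ'`. The equations for `f` and `h` come out in terms of `g (i + 1)` and
`j (i + 1)`, into which the recurrences for `g` and `j` are then substituted.
-/

section GapRecurrence

variable {R M N F : Type*} [Ring R] [AddCommGroup M] [AddCommGroup N] [Module R M] [Module R N]
  [FunLike F M N] [LinearMapClass F R M N] (A : F)

theorem map_add_smul_add_sub_add_smul_add (a v d : M) (a' v' d' : N) (c : R) :
    A (a + c • v + d) - (a' + c • v' + d') = c • (A v - v') + (A a - a') + (A d - d') := by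
  simp only [map_add, map_smul, smul_sub]
  abel

theorem map_add_smul_add_sub_sub_smul_add (v p d : M) (v' p' d' : N) (c : R) :
    A (v - c • p + d) - (v' - c • p' + d') = (A v - v') - c • (A p - p') + (A d - d') := by
  simp only [map_add, map_sub, map_smul, smul_sub]
  abel

theorem sub_map_add_smul_add_sub_sub_smul_add (b : N) (x p d : M) (r p' d' : N) (c : R) :
    (b - A (x + c • p + d)) - (r - c • p' + d') =
      ((b - A x) - r) - c • (A p - p') - A d - d' := by
  simp only [map_add, map_smul, smul_sub]
  abel

end GapRecurrence

/-- For all `i ≥ 1`, the four gaps of the finite-precision pipelined CG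
recurrences satisfy the coupled system
`f (i+1) = f i - α i β i • g (i-1) - α i • h i - A (δx i) - δr i - α i • (A (δp i) - δs i)`,
`g i = β i • g (i-1) + h i + (A (δp i) - δs i)`,
`h (i+1) = h i - α i β i • j (i-1) + A (δu i) - δw i - α i • (A (δq i) - δz i)`, and
`j i = β i • j (i-1) + (A (δq i) - δz i)`. -/
theorem pipecg_coupled_system
    {E : Type*} [NormedAddCommGroup E] [NormedSpace ℝ E]
    (A : E →L[ℝ] E) (b : E)
    (x r p s w u z q m δx δr δw δu δp δs δz δq f g h j : ℕ → E) (α β : ℕ → ℝ)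
    (hx : ∀ i, x (i + 1) = x i + α i • p i + δx i)
    (hr : ∀ i, r (i + 1) = r i - α i • s i + δr i)
    (hw : ∀ i, w (i + 1) = w i - α i • z i + δw i)
    (hu : ∀ i, u (i + 1) = u i - α i • q i + δu i)
    (hp : ∀ i, p (i + 1) = u (i + 1) + β (i + 1) • p i + δp (i + 1))
    (hs : ∀ i, s (i + 1) = w (i + 1) + β (i + 1) • s i + δs (i + 1))
    (hz : ∀ i, z (i + 1) = A (m (i + 1)) + β (i + 1) • z i + δz (i + 1))
    (hq : ∀ i, q (i + 1) = m (i + 1) + β (i + 1) • q i + δq (i + 1))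
    (hf : ∀ i, f i = (b - A (x i)) - r i)
    (hg : ∀ i, g i = A (p i) - s i)
    (hh : ∀ i, h i = A (u i) - w i)
    (hj : ∀ i, j i = A (q i) - z i) :
    ∀ i,
      f (i + 2) = f (i + 1) - (α (i + 1) * β (i + 1)) • g i - α (i + 1) • h (i + 1) -
          A (δx (i + 1)) - δr (i + 1) - α (i + 1) • (A (δp (i + 1)) - δs (i + 1)) ∧
      g (i + 1) = β (i + 1) • g i + h (i + 1) + (A (δp (i + 1)) - δs (i + 1)) ∧
      h (i + 2) = h (i + 1) - (α (i + 1) * β (i + 1)) • j i +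
          A (δu (i + 1)) - δw (i + 1) - α (i + 1) • (A (δq (i + 1)) - δz (i + 1)) ∧
      j (i + 1) = β (i + 1) • j i + (A (δq (i + 1)) - δz (i + 1)) := by
  intro i
  have hg_succ : g (i + 1) = β (i + 1) • g i + h (i + 1) + (A (δp (i + 1)) - δs (i + 1)) := by
    rw [hg, hp, hs, map_add_smul_add_sub_add_smul_add, ← hg, ← hh]
  have hj_succ : j (i + 1) = β (i + 1) • j i + (A (δq (i + 1)) - δz (i + 1)) := by
    rw [hj, hq, hz, map_add_smul_add_sub_add_smul_add, ← hj, sub_self, add_zero]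
  have hf_succ : f (i + 2) = f (i + 1) - α (i + 1) • g (i + 1) - A (δx (i + 1)) - δr (i + 1) := by
    rw [hf, hx, hr, sub_map_add_smul_add_sub_sub_smul_add, ← hf, ← hg]
  have hh_succ : h (i + 2) = h (i + 1) - α (i + 1) • j (i + 1) + (A (δu (i + 1)) - δw (i + 1)) := by
    rw [hh, hu, hw, map_add_smul_add_sub_sub_smul_add, ← hh, ← hj]
  refine ⟨?_, hg_succ, ?_, hj_succ⟩
  · rw [hf_succ, hg_succ]
    module
  · rw [hh_succ, hj_succ]
    module
end

section
/- For all l ≥ 0, the gap j_l of the finite-precision pipelined CG recurrences admits the closed form j_l = (Π_{m=1}^{l} β_m)·j_0 + Σ_{m=1}^{l} (Π_{n=m+1}^{l} β_n)·(A δ^q_m − δ^z_m), where empty products equal 1 and empty sums equal 0. -/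
/-!
Subtracting `A` applied to the `q`-recurrence from the `z`-recurrence cancels the `A mᵢ` terms,
so the gap obeys the first-order linear recurrence `jᵢ = βᵢ jᵢ₋₁ + (A δqᵢ - δzᵢ)`;
unrolling it gives the closed form.
-/

open Finset

theorem eq_prod_smul_add_sum_of_succ_eq_smul_add {R M : Type*} [CommSemiring R]
    [AddCommMonoid M] [Module R M] {x d : ℕ → M} {c : ℕ → R}
    (hx : ∀ i, x (i + 1) = c (i + 1) • x i + d (i + 1)) (l : ℕ) :
    x l = (∏ k ∈ Icc 1 l, c k) • x 0 + ∑ k ∈ Icc 1 l, (∏ n ∈ Icc (k + 1) l, c n) • d k := by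
  induction l with
  | zero => simp
  | succ l ih =>
    have tail_prod : ∀ k ∈ Icc 1 l,
        (∏ n ∈ Icc (k + 1) (l + 1), c n) • d k = c (l + 1) • (∏ n ∈ Icc (k + 1) l, c n) • d k := by
      intro k hk
      rw [prod_Icc_succ_top (by simp at hk; omega), smul_smul, mul_comm]
    rw [hx, ih, prod_Icc_succ_top (by omega), sum_Icc_succ_top (by omega), sum_congr rfl tail_prod,
      ← smul_sum, Icc_eq_empty_of_lt (Nat.lt_succ_self (l + 1)), prod_empty, one_smul, smul_add,
      smul_smul, mul_comm, add_assoc]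

theorem pipecg_gap_succ {R E : Type*} [CommRing R] [AddCommGroup E] [Module R E]
    (A : E →ₗ[R] E) {z q m δz δq : ℕ → E} {β : ℕ → R}
    (hz : ∀ i, z (i + 1) = A (m (i + 1)) + β (i + 1) • z i + δz (i + 1))
    (hq : ∀ i, q (i + 1) = m (i + 1) + β (i + 1) • q i + δq (i + 1)) (i : ℕ) :
    A (q (i + 1)) - z (i + 1) = β (i + 1) • (A (q i) - z i) + (A (δq (i + 1)) - δz (i + 1)) := by
  rw [hz, hq, map_add, map_add, map_smul]
  module

/-- For all `l ≥ 0`, the gap `j` of the finite-precision pipelined CG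
recurrences admits the closed form
`j l = (Π_{m=1}^{l} β m) • j 0 + Σ_{m=1}^{l} (Π_{n=m+1}^{l} β n) • (A (δq m) - δz m)`. -/
theorem pipecg_gap_j_closed_form
    {E : Type*} [NormedAddCommGroup E] [NormedSpace ℝ E]
    (A : E →L[ℝ] E)
    (z q m δz δq j : ℕ → E) (β : ℕ → ℝ)
    (hz : ∀ i, z (i + 1) = A (m (i + 1)) + β (i + 1) • z i + δz (i + 1))
    (hq : ∀ i, q (i + 1) = m (i + 1) + β (i + 1) • q i + δq (i + 1))
    (hj : ∀ i, j i = A (q i) - z i) :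
    ∀ l, j l = (∏ k ∈ Finset.Icc 1 l, β k) • j 0 +
      ∑ k ∈ Finset.Icc 1 l, (∏ n ∈ Finset.Icc (k + 1) l, β n) • (A (δq k) - δz k) := by
  refine eq_prod_smul_add_sum_of_succ_eq_smul_add fun i => ?_
  rw [hj, hj]
  exact pipecg_gap_succ (A : E →ₗ[ℝ] E) hz hq i
end

section
/- For all k ≥ 0, the gap h_k of the finite-precision pipelined CG recurrences admits the closed form h_k = h_0 − Σ_{l=0}^{k−1} α_l j_l + Σ_{l=0}^{k−1} (A δ^u_l − δ^w_l), where empty sums equal 0. -/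
theorem gap_perturbed_step {R M F : Type*} [Ring R] [AddCommGroup M] [Module R M]
    [FunLike F M M] [LinearMapClass F R M M] (A : F) (α : R) (u q δu w z δw : M) :
    A (u - α • q + δu) - (w - α • z + δw) = A u - w - α • (A q - z) + (A δu - δw) := by
  simp only [map_add, map_sub, map_smul, smul_sub]
  abel

/-- For all `k ≥ 0`, the gap `h` of the finite-precision pipelined CG
recurrences admits the closed form
`h k = h 0 - Σ_{l=0}^{k-1} α l • j l + Σ_{l=0}^{k-1} (A (δu l) - δw l)`. -/
theorem pipecg_gap_h_closed_form
    {E : Type*} [NormedAddCommGroup E] [NormedSpace ℝ E]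
    (A : E →L[ℝ] E)
    (w u z q δw δu h j : ℕ → E) (α : ℕ → ℝ)
    (hw : ∀ i, w (i + 1) = w i - α i • z i + δw i)
    (hu : ∀ i, u (i + 1) = u i - α i • q i + δu i)
    (hh : ∀ i, h i = A (u i) - w i)
    (hj : ∀ i, j i = A (q i) - z i) :
    ∀ k, h k = h 0 - (∑ l ∈ Finset.range k, α l • j l) +
      ∑ l ∈ Finset.range k, (A (δu l) - δw l) := by
  have gap_succ : ∀ i, h (i + 1) - h i = A (δu i) - δw i - α i • j i := by
    intro i
    rw [hh, hh, hu, hw, hj, gap_perturbed_step]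
    abel
  intro k
  rw [Finset.eq_sum_range_sub h k]
  simp only [gap_succ, Finset.sum_sub_distrib]
  abel
end

section
/- For all j ≥ 0, the gap g_j of the finite-precision pipelined CG recurrences admits the closed form g_j = (Π_{k=1}^{j} β_k)·g_0 + Σ_{k=1}^{j} (Π_{l=k+1}^{j} β_l)·(A δ^p_k − δ^s_k) + Σ_{k=1}^{j} (Π_{l=k+1}^{j} β_l)·h_k, where empty products equal 1 and empty sums equal 0; consequently, for all i ≥ 0, the residual gap satisfies f_{i+1} = f_0 − Σ_{j=0}^{i} α_j g_j − Σ_{j=0}^{i} (A δ^x_j + δ^r_j). -/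
/-!
Applying `A` to the recurrences for `p` and `x` shows that the gaps obey first-order recurrences:
`g (n+1) = β (n+1) • g n + (A δp - δs + h) (n+1)` and `f (i+1) = f i - α i • g i - (A δx + δr) i`.
The first is an affine recurrence, unrolled into products of the `β`; the second telescopes.
-/

open Finset

section Recurrences

variable {R M : Type*}

theorem affine_recurrence_solution [CommMonoid R] [AddCommMonoid M] [DistribMulAction R M]
    {v e : ℕ → M} {c : ℕ → R} (hv : ∀ n, v (n + 1) = c (n + 1) • v n + e (n + 1)) (n : ℕ) :
    v n = (∏ k ∈ Icc 1 n, c k) • v 0 + ∑ k ∈ Icc 1 n, (∏ l ∈ Icc (k + 1) n, c l) • e k := by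
  induction n with
  | zero => simp
  | succ n ih =>
    have hpos : 1 ≤ n + 1 := by omega
    have hsum : ∑ k ∈ Icc 1 n, (∏ l ∈ Icc (k + 1) (n + 1), c l) • e k =
        c (n + 1) • ∑ k ∈ Icc 1 n, (∏ l ∈ Icc (k + 1) n, c l) • e k := by
      rw [smul_sum]
      refine sum_congr rfl fun k hk => ?_
      rw [prod_Icc_succ_top (by grind), mul_comm, mul_smul]
    rw [hv, ih, prod_Icc_succ_top hpos, sum_Icc_succ_top hpos, hsum,
      Icc_eq_empty_of_lt (Nat.lt_succ_self (n + 1)), prod_empty, one_smul, mul_comm, mul_smul,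
      smul_add, add_assoc]

theorem eq_sub_sum_range_of_succ_eq_sub_s17 [AddCommGroup M] {v d : ℕ → M}
    (hv : ∀ n, v (n + 1) = v n - d n) (n : ℕ) : v n = v 0 - ∑ k ∈ range n, d k := by
  rw [eq_sum_range_sub v n, sub_eq_add_neg, ← sum_neg_distrib]
  simp only [hv, sub_sub_cancel_left]

end Recurrences

section Gaps

variable {R M F : Type*} [CommRing R] [AddCommGroup M] [Module R M] [FunLike F M M]
  [LinearMapClass F R M M] (A : F)

theorem search_direction_gap_step (β : R) (p s u w δp δs : M) :
    A (u + β • p + δp) - (w + β • s + δs) = β • (A p - s) + ((A δp - δs) + (A u - w)) := by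
  simp only [map_add, map_smul]
  module

theorem residual_gap_step (α : R) (b x r p s δx δr : M) :
    (b - A (x + α • p + δx)) - (r - α • s + δr) =
      ((b - A x) - r) - (α • (A p - s) + (A δx + δr)) := by
  simp only [map_add, map_smul]
  module

end Gaps

/-- For all `j ≥ 0`, the gap `g` of the finite-precision pipelined CG
recurrences admits the closed form
`g j = (Π_{k=1}^{j} β k) • g 0 + Σ_{k=1}^{j} (Π_{l=k+1}^{j} β l) • (A (δp k) - δs k)
  + Σ_{k=1}^{j} (Π_{l=k+1}^{j} β l) • h k`;
consequently, for all `i ≥ 0`, the residual gap satisfies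
`f (i+1) = f 0 - Σ_{j=0}^{i} α j • g j - Σ_{j=0}^{i} (A (δx j) + δr j)`. -/
theorem pipecg_gap_g_and_f_closed_form
    {E : Type*} [NormedAddCommGroup E] [NormedSpace ℝ E]
    (A : E →L[ℝ] E) (b : E)
    (x r p s w u δx δr δp δs f g h : ℕ → E) (α β : ℕ → ℝ)
    (hx : ∀ i, x (i + 1) = x i + α i • p i + δx i)
    (hr : ∀ i, r (i + 1) = r i - α i • s i + δr i)
    (hp : ∀ i, p (i + 1) = u (i + 1) + β (i + 1) • p i + δp (i + 1))
    (hs : ∀ i, s (i + 1) = w (i + 1) + β (i + 1) • s i + δs (i + 1))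
    (hf : ∀ i, f i = (b - A (x i)) - r i)
    (hg : ∀ i, g i = A (p i) - s i)
    (hh : ∀ i, h i = A (u i) - w i) :
    (∀ n, g n = (∏ k ∈ Finset.Icc 1 n, β k) • g 0 +
        (∑ k ∈ Finset.Icc 1 n, (∏ l ∈ Finset.Icc (k + 1) n, β l) • (A (δp k) - δs k)) +
        ∑ k ∈ Finset.Icc 1 n, (∏ l ∈ Finset.Icc (k + 1) n, β l) • h k) ∧
      ∀ i, f (i + 1) = f 0 - (∑ n ∈ Finset.range (i + 1), α n • g n) -
        ∑ n ∈ Finset.range (i + 1), (A (δx n) + δr n) := by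
  have hg_succ : ∀ n, g (n + 1) = β (n + 1) • g n + ((A (δp (n + 1)) - δs (n + 1)) + h (n + 1)) :=
    fun n => by rw [hg, hg, hh, hp, hs, search_direction_gap_step]
  have hf_succ : ∀ i, f (i + 1) = f i - (α i • g i + (A (δx i) + δr i)) :=
    fun i => by rw [hf, hf, hg, hx, hr, residual_gap_step]
  refine ⟨fun n => ?_, fun i => ?_⟩
  · rw [affine_recurrence_solution (e := fun k => (A (δp k) - δs k) + h k) hg_succ n]
    simp only [smul_add, sum_add_distrib, add_assoc]
  · rw [eq_sub_sum_range_of_succ_eq_sub_s17 hf_succ, sum_add_distrib, sub_sub]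
end

section
/- For all i ≥ 1, the preconditioned gaps of the finite-precision pipelined CG recurrences satisfy ℓ_i = β_i ℓ_{i−1} + M δ^s_i − δ^q_i and k_{i+1} = k_i − α_i ℓ_i + M δ^r_i − δ^u_i. -/
section Gap

variable {R E F 𝓕 : Type*} [Ring R] [AddCommGroup E] [Module R E] [AddCommGroup F] [Module R F]
  [FunLike 𝓕 E F] [LinearMapClass 𝓕 R E F]

theorem map_add_smul_add_sub (M : 𝓕) (a b d : E) (A B D : F) (c : R) :
    M (a + c • b + d) - (A + c • B + D) = (M a - A) + c • (M b - B) + (M d - D) := by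
  simp only [map_add, map_smul, smul_sub]
  abel

theorem map_sub_smul_add_sub (M : 𝓕) (a b d : E) (A B D : F) (c : R) :
    M (a - c • b + d) - (A - c • B + D) = (M a - A) - c • (M b - B) + (M d - D) := by
  simp only [map_add, map_sub, map_smul, smul_sub]
  abel

end Gap

/-- For all `i ≥ 1`, the preconditioned gaps of the finite-precision pipelined
CG recurrences satisfy `ℓ i = β i • ℓ (i-1) + M (δs i) - δq i` and
`k (i+1) = k i - α i • ℓ i + M (δr i) - δu i`. -/
theorem pipecg_preconditioned_gap_recursion
    {E : Type*} [NormedAddCommGroup E] [NormedSpace ℝ E]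
    (M : E →L[ℝ] E)
    (r s w u q m δr δu δs δq k l : ℕ → E) (α β : ℕ → ℝ)
    (hr : ∀ i, r (i + 1) = r i - α i • s i + δr i)
    (hu : ∀ i, u (i + 1) = u i - α i • q i + δu i)
    (hs : ∀ i, s (i + 1) = w (i + 1) + β (i + 1) • s i + δs (i + 1))
    (hq : ∀ i, q (i + 1) = m (i + 1) + β (i + 1) • q i + δq (i + 1))
    (hm : ∀ i, m i = M (w i))
    (hk : ∀ i, k i = M (r i) - u i)
    (hl : ∀ i, l i = M (s i) - q i) :
    ∀ i, l (i + 1) = β (i + 1) • l i + M (δs (i + 1)) - δq (i + 1) ∧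
      k (i + 2) = k (i + 1) - α (i + 1) • l (i + 1) + M (δr (i + 1)) - δu (i + 1) := by
  intro i
  constructor
  · rw [hl, hs, hq, hm, map_add_smul_add_sub, sub_self, zero_add, ← hl, add_sub_assoc]
  · rw [hk, hr, hu, map_sub_smul_add_sub, ← hk, ← hl, add_sub_assoc]
end
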